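/- In a complete structured DNNF where ⊤- and ⊥-gates are never inputs, for any ∪-gate g, the recursive enumeration scheme that iterates over all var-gates and ×-gates g' with a ∪-only path to g, outputting S_var(g') for var-gates and all unions S_L ∪ S_R over recursive enumerations of the left and right inputs for ×-gates, produces exactly the multiset-support equal to S(g): every element of S(g) is produced at least once and every produced set belongs to S(g). -/

import Mathlib

/-- Positions in binary trees (paths from the root; `false` = left, `true` = right). -/
abbrev BPos := List Bool

inductive GateType where
  | top | bot | var | times | cup
deriving DecidableEq

/-- A set circuit: a DAG of gates typed ⊤, ⊥, var, ×, ∪.  `wire g' g` means `g'` is an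
input of `g`. -/
structure SetCircuit (V G : Type) where
  gtype : G → GateType
  wire : G → G → Prop
  varLabel : G → Set V
  varLabel_inj : ∀ g g', gtype g = GateType.var → gtype g' = GateType.var →
      varLabel g = varLabel g' → g = g'
  source_no_input : ∀ g, (gtype g = GateType.top ∨ gtype g = GateType.bot ∨
      gtype g = GateType.var) → ∀ g', ¬ wire g' g
  const_no_output : ∀ g, (gtype g = GateType.top ∨ gtype g = GateType.bot) → ∀ g', ¬ wire g g'
  times_two : ∀ g, gtype g = GateType.times → ∃ g₁ g₂, g₁ ≠ g₂ ∧ wire g₁ g ∧ wire g₂ g ∧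
      ∀ g', wire g' g → g' = g₁ ∨ g' = g₂
  cup_one : ∀ g, gtype g = GateType.cup → ∃ g', wire g' g

/-- `Captures C g S` : the set `S` of variables belongs to the set `S(g)` captured by
gate `g`, following the inductive semantics of set circuits. -/
inductive Captures {V G : Type} (C : SetCircuit V G) : G → Set V → Prop
  | var {g} : C.gtype g = GateType.var → Captures C g (C.varLabel g)
  | top {g} : C.gtype g = GateType.top → Captures C g ∅
  | times {g g₁ g₂ S₁ S₂} : C.gtype g = GateType.times → C.wire g₁ g → C.wire g₂ g →
      g₁ ≠ g₂ → Captures C g₁ S₁ → Captures C g₂ S₂ → Captures C g (S₁ ∪ S₂)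
  | cup {g g' S} : C.gtype g = GateType.cup → C.wire g' g → Captures C g' S → Captures C g S

/-- `CupPath C g' g` : there is a wire-path from `g'` to `g` all of whose gates strictly
between `g'` and `g` are ∪-gates. -/
inductive CupPath {V G : Type} (C : SetCircuit V G) : G → G → Prop
  | single {g' g} : C.wire g' g → CupPath C g' g
  | cons {g' m g} : C.wire g' m → C.gtype m = GateType.cup → CupPath C m g → CupPath C g' g

/-- A v-tree: a binary tree whose leaves are labeled by sets of variables. -/
inductive VTree (V : Type) where
  | leaf (vars : Set V)
  | node (l r : VTree V)

/-- The subtree of a v-tree at a position (if any). -/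
def VTree.sub {V : Type} : VTree V → BPos → Option (VTree V)
  | t, [] => some t
  | VTree.leaf _, _ :: _ => none
  | VTree.node l r, b :: p => VTree.sub (if b then r else l) p

/-- Variables occurring in (the leaves of) a v-tree. -/
def VTree.vars {V : Type} : VTree V → Set V
  | VTree.leaf vs => vs
  | VTree.node l r => l.vars ∪ r.vars

/-- Variables occurring below a given position of a v-tree. -/
def VTree.varsAt {V : Type} (t : VTree V) (p : BPos) : Set V :=
  match t.sub p with
  | some s => s.vars
  | none => ∅

/-- A complete structured DNNF: a set circuit together with a v-tree and a structuring
function `σ` mapping each gate to a (valid) position of the v-tree (its box). -/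
structure StructuredDNNF (V G : Type) extends SetCircuit V G where
  vtree : VTree V
  σ : G → BPos
  σ_valid : ∀ g, (vtree.sub (σ g)).isSome
  var_leaf : ∀ g, gtype g = GateType.var →
      ∃ vs, vtree.sub (σ g) = some (VTree.leaf vs) ∧ varLabel g ⊆ vs
  var_nonempty : ∀ g, gtype g = GateType.var → (varLabel g).Nonempty
  wire_struct : ∀ g' g, wire g' g →
      σ g' = σ g ∨ (gtype g' = GateType.cup ∧ ∃ b, σ g' = σ g ++ [b])
  times_children : ∀ g, gtype g = GateType.times →
      (∃ g₁, wire g₁ g ∧ σ g₁ = σ g ++ [false]) ∧ (∃ g₂, wire g₂ g ∧ σ g₂ = σ g ++ [true])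
  leaves_disjoint : ∀ p₁ p₂ vs₁ vs₂, vtree.sub p₁ = some (VTree.leaf vs₁) →
      vtree.sub p₂ = some (VTree.leaf vs₂) → p₁ ≠ p₂ → Disjoint vs₁ vs₂

/-- `Produced D g S` : the recursive enumeration scheme started at gate `g` outputs the
set `S`: it iterates over the var-gates and ×-gates with a ∪-only path to `g`,
outputting the label of var-gates, and for ×-gates all unions `S₁ ∪ S₂` obtained by
recursively enumerating the left and right inputs. -/
inductive Produced {V G : Type} (D : StructuredDNNF V G) : G → Set V → Prop
  | var {g g'} : D.gtype g' = GateType.var → CupPath D.toSetCircuit g' g →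
      Produced D g (D.varLabel g')
  | times {g g' g₁ g₂ S₁ S₂} : D.gtype g' = GateType.times → CupPath D.toSetCircuit g' g →
      D.wire g₁ g' → D.σ g₁ = D.σ g' ++ [false] →
      D.wire g₂ g' → D.σ g₂ = D.σ g' ++ [true] →
      Produced D g₁ S₁ → Produced D g₂ S₂ → Produced D g (S₁ ∪ S₂)

/-! Soundness: an enumerated set is built along ∪-only paths and ×-gates, exactly as a
derivation of `Captures` is, because the left and right v-tree children of a ×-gate are
two distinct ∪-gates. Completeness: induct on the derivation of `Captures`, strengthened
to produce the set at every ∪-gate reachable by a ∪-only path (or equal to the gate);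
a ×-gate's two inputs are then necessarily its left and right children. -/

namespace StructuredDNNF

variable {V G : Type} (D : StructuredDNNF V G)

lemma gtype_eq_cup_of_σ_eq_append {g' g : G} {b : Bool} (hw : D.wire g' g)
    (hσ : D.σ g' = D.σ g ++ [b]) : D.gtype g' = GateType.cup := by
  rcases D.wire_struct g' g hw with h | ⟨h, _⟩
  · simpa [hσ] using congrArg List.length h
  · exact h

lemma ne_of_σ_eq_append_false_true {g g₁ g₂ : G} (h₁ : D.σ g₁ = D.σ g ++ [false])
    (h₂ : D.σ g₂ = D.σ g ++ [true]) : g₁ ≠ g₂ := by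
  rintro rfl
  simp [h₁] at h₂

lemma eq_children_of_wire_times {g g₁ g₂ gL gR : G} (ht : D.gtype g = GateType.times)
    (hw₁ : D.wire g₁ g) (hw₂ : D.wire g₂ g) (hne : g₁ ≠ g₂)
    (hwL : D.wire gL g) (hσL : D.σ gL = D.σ g ++ [false])
    (hwR : D.wire gR g) (hσR : D.σ gR = D.σ g ++ [true]) :
    g₁ = gL ∧ g₂ = gR ∨ g₁ = gR ∧ g₂ = gL := by
  have hLR := D.ne_of_σ_eq_append_false_true hσL hσR
  obtain ⟨a, b, -, -, -, hab⟩ := D.times_two g ht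
  rcases hab g₁ hw₁ with rfl | rfl <;> rcases hab g₂ hw₂ with rfl | rfl <;>
    rcases hab gL hwL with rfl | rfl <;> rcases hab gR hwR with rfl | rfl <;> tauto

end StructuredDNNF

lemma CupPath.exists_wire {V G : Type} {C : SetCircuit V G} {g' g : G} (hp : CupPath C g' g) :
    ∃ m, C.wire g' m := by
  cases hp with
  | single hw => exact ⟨_, hw⟩
  | cons hw _ _ => exact ⟨_, hw⟩

lemma Captures.of_cupPath {V G : Type} {C : SetCircuit V G} {g' g : G} {S : Set V}
    (hp : CupPath C g' g) (hg : C.gtype g = GateType.cup) (hS : Captures C g' S) :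
    Captures C g S := by
  induction hp with
  | single hw => exact Captures.cup hg hw hS
  | cons hw hm _ ih => exact ih hg (Captures.cup hm hw hS)

lemma Produced.captures {V G : Type} {D : StructuredDNNF V G} {g : G} {S : Set V}
    (hS : Produced D g S) (hg : D.gtype g = GateType.cup) : Captures D.toSetCircuit g S := by
  induction hS with
  | var hv hp => exact (Captures.var hv).of_cupPath hp hg
  | times ht hp hw₁ hσ₁ hw₂ hσ₂ _ _ ih₁ ih₂ =>
    have hne := D.ne_of_σ_eq_append_false_true hσ₁ hσ₂
    exact (Captures.times ht hw₁ hw₂ hne (ih₁ (D.gtype_eq_cup_of_σ_eq_append hw₁ hσ₁))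
      (ih₂ (D.gtype_eq_cup_of_σ_eq_append hw₂ hσ₂))).of_cupPath hp hg

lemma Captures.produced_of_reflGen {V G : Type} {D : StructuredDNNF V G} {g : G}
    {S : Set V} (hS : Captures D.toSetCircuit g S) :
    ∀ u, D.gtype u = GateType.cup → Relation.ReflGen (CupPath D.toSetCircuit) g u →
      Produced D u S := by
  induction hS with
  | var hv =>
    rintro u hu (_ | hp)
    · simp [hv] at hu
    · exact Produced.var hv hp
  | top ht =>
    rintro u hu (_ | hp)
    · simp [ht] at hu
    · obtain ⟨m, hw⟩ := hp.exists_wire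
      exact absurd hw (D.const_no_output _ (Or.inl ht) m)
  | @times g g₁ g₂ S₁ S₂ ht hw₁ hw₂ hne _ _ ih₁ ih₂ =>
    rintro u hu (_ | hp)
    · simp [ht] at hu
    obtain ⟨⟨gL, hwL, hσL⟩, ⟨gR, hwR, hσR⟩⟩ := D.times_children g ht
    have hL := D.gtype_eq_cup_of_σ_eq_append hwL hσL
    have hR := D.gtype_eq_cup_of_σ_eq_append hwR hσR
    rcases D.eq_children_of_wire_times ht hw₁ hw₂ hne hwL hσL hwR hσR with
      ⟨rfl, rfl⟩ | ⟨rfl, rfl⟩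
    · exact Produced.times ht hp hwL hσL hwR hσR (ih₁ _ hL .refl) (ih₂ _ hR .refl)
    · rw [Set.union_comm]
      exact Produced.times ht hp hwL hσL hwR hσR (ih₂ _ hL .refl) (ih₁ _ hR .refl)
  | cup hg hw _ ih =>
    rintro u hu (_ | hp)
    · exact ih _ hu (.single (CupPath.single hw))
    · exact ih _ hu (.single (CupPath.cons hw hg hp))

/-- for a ∪-gate `g`, the recursive enumeration scheme produces exactly
the captured set `S(g)`: everything produced is in `S(g)` and everything in `S(g)` is
produced (at least once). -/
theorem stmt17 {V G : Type} (D : StructuredDNNF V G) (g : G)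
    (hg : D.gtype g = GateType.cup) :
    ∀ S : Set V, Produced D g S ↔ Captures D.toSetCircuit g S :=
  fun _ => ⟨fun h => h.captures hg, fun h => h.produced_of_reflGen g hg .refl⟩
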